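/- Let (X, B, P) be a probability space and let (a_n)_{n∈ℕ} be an increasing sequence of sub-σ-fields of B with a = σ(⋃_{n∈ℕ} a_n). Suppose there exists n ∈ ℕ such that sup over all finite partitions ξ of X with atoms in a of E[−∑_{A∈ξ} P(A | a_n) log P(A | a_n)] is finite. Then for every ε > 0 there exists N ∈ ℕ such that for every A ∈ a there exists B ∈ a_N with P(A △ B) < ε. -/

import Mathlib

open MeasureTheory Real Set
open scoped ENNReal

namespace MCE

variable {X : Type*}

/-- `ξ` is a partition of `X`: its members are pairwise disjoint and cover `X`. -/
def IsPartition (ξ : Set (Set X)) : Prop :=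
  ξ.PairwiseDisjoint id ∧ ⋃₀ ξ = Set.univ

/-- `Q` is a `ξ`-set: a union of atoms of the partition `ξ`. -/
def IsPartitionSet (ξ : Set (Set X)) (Q : Set X) : Prop :=
  ∃ S ⊆ ξ, Q = ⋃₀ S

/-- The countable collection `Q` separates the atoms of `ξ`. -/
def SeparatesAtoms (ξ : Set (Set X)) (Q : ℕ → Set X) : Prop :=
  ∀ A ∈ ξ, ∀ B ∈ ξ, A ≠ B →
    ∃ n, (A ⊆ Q n ∧ B ⊆ (Q n)ᶜ) ∨ (B ⊆ Q n ∧ A ⊆ (Q n)ᶜ)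

/-- `Q` is a basis for the partition `ξ`: a countable collection of measurable
`ξ`-sets separating the atoms of `ξ`. -/
def IsPartitionBasis (mX : MeasurableSpace X) (ξ : Set (Set X)) (Q : ℕ → Set X) : Prop :=
  (∀ n, MeasurableSet[mX] (Q n)) ∧ (∀ n, IsPartitionSet ξ (Q n)) ∧ SeparatesAtoms ξ Q

/-- A measurable partition: a partition admitting a basis. -/
def IsMeasurablePartition (mX : MeasurableSpace X) (ξ : Set (Set X)) : Prop :=
  IsPartition ξ ∧ ∃ Q : ℕ → Set X, IsPartitionBasis mX ξ Q

/-- The sub-σ-field `ς(ξ)` associated with a measurable partition `ξ`: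
the σ-field generated by the measurable `ξ`-sets. -/
def partitionSigma (mX : MeasurableSpace X) (ξ : Set (Set X)) : MeasurableSpace X :=
  MeasurableSpace.generateFrom {Q | MeasurableSet[mX] Q ∧ IsPartitionSet ξ Q}

/-- The conditional probability `P(A ∣ m)` of a set `A` given a sub-σ-field `m`,
as a function on `X`. -/
noncomputable def condProb (mX : MeasurableSpace X) (P : @Measure X mX)
    (m : MeasurableSpace X) (A : Set X) : X → ℝ :=
  MeasureTheory.condExp m P (A.indicator fun _ => (1 : ℝ))

open Classical in
/-- The conditional entropy `H(ξ ∣ m) = E[-∑_{A ∈ ξ} P(A∣m) log P(A∣m)]` of a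
countable partition `ξ` given a sub-σ-field `m`; it is `∞` for uncountable `ξ`. -/
noncomputable def pCondEntropy (mX : MeasurableSpace X) (P : @Measure X mX)
    (m : MeasurableSpace X) (ξ : Set (Set X)) : ℝ≥0∞ :=
  if ξ.Countable then
    ∫⁻ x, (∑' A : ξ, ENNReal.ofReal (Real.negMulLog (condProb mX P m (A : Set X) x))) ∂P
  else ⊤

/-- `ξ ∈ Z₀^a` : `ξ` is a finite partition of `X` with atoms belonging to the
σ-field `a`. -/
def FinPartitionIn (a : MeasurableSpace X) (ξ : Set (Set X)) : Prop :=
  ξ.Finite ∧ IsPartition ξ ∧ ∀ A ∈ ξ, MeasurableSet[a] A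

/-- Martin's condition (eq:martin) for a filtration `(a n)` generating `ainf`:
there is `n` such that the conditional entropy given `a n` is uniformly bounded
over all finite partitions with atoms in `ainf`. -/
def MartinCondition (mX : MeasurableSpace X) (P : @Measure X mX)
    (a : ℕ → MeasurableSpace X) (ainf : MeasurableSpace X) : Prop :=
  ∃ n : ℕ, (⨆ (ξ : Set (Set X)) (_ : FinPartitionIn ainf ξ),
    pCondEntropy mX P (a n) ξ) < ⊤

/-- The point partition `ε = {{x} : x ∈ X}`. -/
def pointPartition (X : Type*) : Set (Set X) :=
  Set.range fun x : X => ({x} : Set X)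

/-- `(X, mX, P)` is a Lebesgue space: a probability space admitting a countable
basis of measurable sets which generates the σ-field and separates points. -/
def IsLebesgueSpace (mX : MeasurableSpace X) (P : @Measure X mX) : Prop :=
  @IsProbabilityMeasure X mX P ∧
  ∃ Γ : ℕ → Set X, (∀ j, MeasurableSet[mX] (Γ j)) ∧
    MeasurableSpace.generateFrom (Set.range Γ) = mX ∧
    ∀ x y : X, x ≠ y → ∃ j, (x ∈ Γ j ∧ y ∉ Γ j) ∨ (y ∈ Γ j ∧ x ∉ Γ j)

end MCE

open MCE MeasureTheory


namespace MartinAux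

open MCE

/-- pointwise entropy splitting inequality -/
lemma negMulLog_split {a b : ℝ} (ha : 0 ≤ a) (hb : 0 ≤ b) :
    Real.negMulLog (a + b) + min a b * Real.log 2 ≤ Real.negMulLog a + Real.negMulLog b := by
  have key : ∀ u v : ℝ, 0 ≤ u → 0 ≤ v → u ≤ v →
      Real.negMulLog (u + v) + u * Real.log 2 ≤ Real.negMulLog u + Real.negMulLog v := by
    intro u v hu hv huv
    rcases eq_or_lt_of_le hu with h0 | h0
    · simp [← h0, Real.negMulLog]
    · have hv0 : 0 < v := lt_of_lt_of_le h0 huv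
      have hsum : 0 < u + v := by linarith
      have h1 : Real.log u ≤ Real.log (u + v) - Real.log 2 := by
        have : u ≤ (u + v) / 2 := by linarith
        calc Real.log u ≤ Real.log ((u + v) / 2) := Real.log_le_log h0 this
          _ = Real.log (u + v) - Real.log 2 := by
            rw [Real.log_div (by positivity) (by norm_num)]
      have h2 : Real.log v ≤ Real.log (u + v) := Real.log_le_log hv0 (by linarith)
      have h3 : u * Real.log u ≤ u * (Real.log (u + v) - Real.log 2) :=
        mul_le_mul_of_nonneg_left h1 hu
      have h4 : v * Real.log v ≤ v * Real.log (u + v) :=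
        mul_le_mul_of_nonneg_left h2 hv
      simp only [Real.negMulLog]
      nlinarith
  rcases le_total a b with h | h
  · simpa [min_eq_left h] using key a b ha hb h
  · have := key b a hb ha h
    simpa [min_eq_right h, add_comm b a, add_comm (Real.negMulLog b)] using this

variable {X : Type*} {m : MeasurableSpace X} {mX : MeasurableSpace X} {P : Measure X}

lemma integrable_ind [IsFiniteMeasure P] {S : Set X} (hS : MeasurableSet[mX] S) :
    Integrable (S.indicator fun _ => (1 : ℝ)) P :=
  (integrable_const 1).indicator hS

lemma condProb_empty : condProb mX P m (∅ : Set X) = 0 := by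
  unfold condProb
  rw [Set.indicator_empty]
  exact condExp_zero

lemma condProb_nonneg (S : Set X) : 0 ≤ᵐ[P] condProb mX P m S :=
  condExp_nonneg (Filter.Eventually.of_forall
    (Set.indicator_nonneg (fun _ _ => zero_le_one)))

lemma condProb_le_one [IsFiniteMeasure P] (hm : m ≤ mX) {S : Set X}
    (hS : MeasurableSet[mX] S) :
    condProb mX P m S ≤ᵐ[P] fun _ => (1 : ℝ) := by
  have h := condExp_mono (μ := P) (m := m) (integrable_ind hS) (integrable_const (1 : ℝ))
    (Filter.Eventually.of_forall (fun x => Set.indicator_le_self' (fun _ _ => zero_le_one) x))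
  calc condProb mX P m S ≤ᵐ[P] P[(fun _ => (1:ℝ)) | m] := h
    _ = fun _ => (1:ℝ) := condExp_const hm 1

lemma condProb_add [IsFiniteMeasure P] {S T : Set X} (hS : MeasurableSet[mX] S)
    (hT : MeasurableSet[mX] T) (hd : Disjoint S T) :
    condProb mX P m (S ∪ T) =ᵐ[P] condProb mX P m S + condProb mX P m T := by
  unfold condProb
  rw [Set.indicator_union_of_disjoint hd]
  exact condExp_add (integrable_ind hS) (integrable_ind hT) m

lemma setIntegral_condProb [IsFiniteMeasure P] (hm : m ≤ mX) {S D : Set X}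
    (hS : MeasurableSet[mX] S) (hD : MeasurableSet[m] D) :
    ∫ x in D, condProb mX P m S x ∂P = (P (S ∩ D)).toReal := by
  haveI : SigmaFinite (P.trim hm) := by
    haveI := isFiniteMeasure_trim (μ := P) hm
    infer_instance
  unfold condProb
  rw [setIntegral_condExp hm (integrable_ind hS) hD]
  rw [@integral_indicator_const X ℝ mX _ _ (P.restrict D) _ (1 : ℝ) S hS]
  simp [Measure.real, Measure.restrict_apply hS]


section Atoms

variable (A : ℕ → Set X)

/-- The atom of the partition generated by `A 0, ..., A (k-1)` with signature `s`. -/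
def atom (k : ℕ) (s : Fin k → Bool) : Set X :=
  ⋂ i : Fin k, (if s i then A i else (A i)ᶜ)

lemma atom_zero (s : Fin 0 → Bool) : atom A 0 s = Set.univ := by
  simp [atom]

lemma mem_atom_iff {k : ℕ} {s : Fin k → Bool} {x : X} :
    x ∈ atom A k s ↔ ∀ i : Fin k, (s i = true ↔ x ∈ A i) := by
  simp only [atom, Set.mem_iInter]
  refine forall_congr' fun i => ?_
  cases h : s i <;> simp [h]

lemma atom_congr {A' : ℕ → Set X} {k : ℕ} (h : ∀ i : Fin k, A i = A' i)
    (s : Fin k → Bool) : atom A k s = atom A' k s := by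
  unfold atom
  exact Set.iInter_congr fun i => by rw [h i]

lemma atom_measurable {m' : MeasurableSpace X} {k : ℕ} (h : ∀ i, MeasurableSet[m'] (A i))
    (s : Fin k → Bool) : MeasurableSet[m'] (atom A k s) := by
  refine MeasurableSet.iInter fun i => ?_
  cases hs : s i <;> simp only [hs, if_true, if_false, Bool.false_eq_true]
  · exact (h i).compl
  · exact h i

lemma atom_disjoint {k : ℕ} {s t : Fin k → Bool} (hst : s ≠ t) :
    Disjoint (atom A k s) (atom A k t) := by
  obtain ⟨i, hi⟩ := Function.ne_iff.mp hst
  rw [Set.disjoint_left]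
  intro x hxs hxt
  rw [mem_atom_iff] at hxs hxt
  have h1 := hxs i
  have h2 := hxt i
  cases h : s i <;> cases h' : t i <;> simp_all

lemma atom_cover (k : ℕ) (x : X) : ∃ s : Fin k → Bool, x ∈ atom A k s := by
  classical
  refine ⟨fun i => decide (x ∈ A i), ?_⟩
  rw [mem_atom_iff]
  intro i
  simp

lemma atom_snoc {k : ℕ} (s : Fin k → Bool) (b : Bool) :
    atom A (k + 1) (Fin.snoc s b) = atom A k s ∩ (if b then A k else (A k)ᶜ) := by
  ext x
  simp only [atom, Set.mem_iInter, Set.mem_inter_iff, Fin.forall_fin_succ']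
  simp [Fin.snoc_castSucc, Fin.snoc_last]

/-- the equivalence `(Fin k → Bool) × Bool ≃ (Fin (k+1) → Bool)` by appending. -/
def snocEquiv (k : ℕ) : ((Fin k → Bool) × Bool) ≃ (Fin (k + 1) → Bool) where
  toFun p := Fin.snoc p.1 p.2
  invFun s := (fun i => s i.castSucc, s (Fin.last k))
  left_inv p := by
    refine Prod.ext ?_ ?_ <;> simp [Fin.snoc_castSucc, Fin.snoc_last]
  right_inv s := by
    funext i
    refine Fin.lastCases ?_ ?_ i <;> simp [Fin.snoc_castSucc, Fin.snoc_last]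

end Atoms

end MartinAux

namespace MartinAux

open MCE

variable {X : Type*} {m : MeasurableSpace X} {mX : MeasurableSpace X} {P : Measure X}

/-- entropy of the partition generated by `A 0, ..., A (k-1)` given `m`. -/
noncomputable def ent (mX : MeasurableSpace X) (P : @Measure X mX) (m : MeasurableSpace X)
    (A : ℕ → Set X) (k : ℕ) : ℝ≥0∞ :=
  ∫⁻ x, ∑ s : Fin k → Bool,
    ENNReal.ofReal (Real.negMulLog (condProb mX P m (atom A k s) x)) ∂P

lemma measurable_condProb (hm : m ≤ mX) (S : Set X) :
    Measurable[mX] (condProb mX P m S) :=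
  (stronglyMeasurable_condExp.measurable).mono hm le_rfl

lemma measurable_cp_term (hm : m ≤ mX) (S : Set X) :
    Measurable[mX] fun x => ENNReal.ofReal (Real.negMulLog (condProb mX P m S x)) :=
  ENNReal.measurable_ofReal.comp
    (Real.continuous_negMulLog.measurable.comp (measurable_condProb hm S))

lemma ent_step [IsProbabilityMeasure P] (hm : m ≤ mX) (A : ℕ → Set X) (k : ℕ)
    (hmeas : ∀ i, MeasurableSet[mX] (A i)) {ε2 : ℝ} (hε2 : 0 < ε2)
    (hbad : ∀ D : (Fin k → Bool) → Set X, (∀ t, MeasurableSet[m] (D t)) →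
      ENNReal.ofReal ε2 ≤ P (symmDiff (A k) (⋃ t, atom A k t ∩ D t))) :
    ent mX P m A k + ENNReal.ofReal (ε2 * Real.log 2) ≤ ent mX P m A (k + 1) := by
  classical
  set f : (Fin k → Bool) → X → ℝ := fun t => condProb mX P m (atom A k t ∩ A k) with hfdef
  set g : (Fin k → Bool) → X → ℝ := fun t => condProb mX P m (atom A k t ∩ (A k)ᶜ) with hgdef
  have hatomMeas : ∀ t, MeasurableSet[mX] (atom A k t) := atom_measurable A hmeas
  have hfSme : ∀ t : Fin k → Bool, MeasurableSet[mX] (atom A k t ∩ A k) :=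
    fun t => (hatomMeas t).inter (hmeas k)
  have hgSme : ∀ t : Fin k → Bool, MeasurableSet[mX] (atom A k t ∩ (A k)ᶜ) :=
    fun t => (hatomMeas t).inter (hmeas k).compl
  -- a.e. facts
  have hae : ∀ᵐ x ∂P, ∀ t : Fin k → Bool,
      0 ≤ f t x ∧ 0 ≤ g t x ∧ condProb mX P m (atom A k t) x = f t x + g t x ∧
        condProb mX P m (atom A k t) x ≤ 1 := by
    rw [ae_all_iff]
    intro t
    have h1 := condProb_nonneg (mX := mX) (P := P) (m := m) (atom A k t ∩ A k)
    have h2 := condProb_nonneg (mX := mX) (P := P) (m := m) (atom A k t ∩ (A k)ᶜ)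
    have hdisj : Disjoint (atom A k t ∩ A k) (atom A k t ∩ (A k)ᶜ) :=
      (disjoint_compl_right (a := A k)).mono Set.inter_subset_right Set.inter_subset_right
    have h3 : condProb mX P m (atom A k t) =ᵐ[P] f t + g t := by
      conv_lhs => rw [← Set.inter_union_compl (atom A k t) (A k)]
      exact condProb_add (hfSme t) (hgSme t) hdisj
    have h4 := condProb_le_one (P := P) hm (hatomMeas t)
    filter_upwards [h1, h2, h3, h4] with x hx1 hx2 hx3 hx4
    exact ⟨hx1, hx2, by simpa using hx3, hx4⟩
  -- the optimal m-measurable approximations inside each atom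
  set D : (Fin k → Bool) → Set X := fun t => {x | g t x ≤ f t x} with hDdef
  have hDm : ∀ t, MeasurableSet[m] (D t) := fun t =>
    measurableSet_le stronglyMeasurable_condExp.measurable stronglyMeasurable_condExp.measurable
  -- pointwise inequality
  have hpt : ∀ᵐ x ∂P,
      (∑ t : Fin k → Bool, ENNReal.ofReal (Real.negMulLog (condProb mX P m (atom A k t) x)))
        + ∑ t : Fin k → Bool, ENNReal.ofReal (min (f t x) (g t x) * Real.log 2)
      ≤ ∑ s : Fin (k + 1) → Bool,
          ENNReal.ofReal (Real.negMulLog (condProb mX P m (atom A (k + 1) s) x)) := by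
    filter_upwards [hae] with x hx
    have hre : (∑ s : Fin (k + 1) → Bool,
          ENNReal.ofReal (Real.negMulLog (condProb mX P m (atom A (k + 1) s) x)))
        = ∑ t : Fin k → Bool,
            (ENNReal.ofReal (Real.negMulLog (f t x)) + ENNReal.ofReal (Real.negMulLog (g t x))) := by
      rw [← Equiv.sum_comp (snocEquiv k)
        (fun s => ENNReal.ofReal (Real.negMulLog (condProb mX P m (atom A (k + 1) s) x))),
        Fintype.sum_prod_type]
      refine Finset.sum_congr rfl fun t _ => ?_
      rw [Fintype.sum_bool]
      have e1 : atom A (k + 1) (Fin.snoc t true) = atom A k t ∩ A k := by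
        rw [atom_snoc]; simp
      have e2 : atom A (k + 1) (Fin.snoc t false) = atom A k t ∩ (A k)ᶜ := by
        rw [atom_snoc]; simp
      simp only [snocEquiv, Equiv.coe_fn_mk, e1, e2]
      rfl
    rw [hre, ← Finset.sum_add_distrib]
    refine Finset.sum_le_sum fun t _ => ?_
    obtain ⟨hf0, hg0, hsum, hle1⟩ := hx t
    rw [hsum] at hle1 ⊢
    have hnn : 0 ≤ Real.negMulLog (f t x + g t x) :=
      Real.negMulLog_nonneg (by linarith) hle1
    have hmin : 0 ≤ min (f t x) (g t x) * Real.log 2 :=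
      mul_nonneg (le_min hf0 hg0) (Real.log_nonneg (by norm_num))
    calc ENNReal.ofReal (Real.negMulLog (f t x + g t x))
          + ENNReal.ofReal (min (f t x) (g t x) * Real.log 2)
        = ENNReal.ofReal (Real.negMulLog (f t x + g t x)
            + min (f t x) (g t x) * Real.log 2) := (ENNReal.ofReal_add hnn hmin).symm
      _ ≤ ENNReal.ofReal (Real.negMulLog (f t x) + Real.negMulLog (g t x)) :=
          ENNReal.ofReal_le_ofReal (negMulLog_split hf0 hg0)
      _ ≤ ENNReal.ofReal (Real.negMulLog (f t x)) + ENNReal.ofReal (Real.negMulLog (g t x)) :=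
          ENNReal.ofReal_add_le
  -- integrate the pointwise inequality
  have hint : ent mX P m A k + ∑ t : Fin k → Bool,
      ∫⁻ x, ENNReal.ofReal (min (f t x) (g t x) * Real.log 2) ∂P ≤ ent mX P m A (k + 1) := by
    have hmeas1 : Measurable fun x => ∑ t : Fin k → Bool,
        ENNReal.ofReal (Real.negMulLog (condProb mX P m (atom A k t) x)) :=
      Finset.measurable_sum _ fun t _ => measurable_cp_term hm _
    calc ent mX P m A k + ∑ t : Fin k → Bool,
          ∫⁻ x, ENNReal.ofReal (min (f t x) (g t x) * Real.log 2) ∂P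
        = ent mX P m A k + ∫⁻ x, ∑ t : Fin k → Bool,
            ENNReal.ofReal (min (f t x) (g t x) * Real.log 2) ∂P := by
          rw [lintegral_finset_sum]
          intro t _
          exact ENNReal.measurable_ofReal.comp
            (((measurable_condProb hm _).min (measurable_condProb hm _)).mul_const _)
      _ = ∫⁻ x, ((∑ t : Fin k → Bool,
            ENNReal.ofReal (Real.negMulLog (condProb mX P m (atom A k t) x)))
            + ∑ t : Fin k → Bool,
            ENNReal.ofReal (min (f t x) (g t x) * Real.log 2)) ∂P := by
          rw [lintegral_add_left hmeas1]
          rfl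
      _ ≤ ent mX P m A (k + 1) := lintegral_mono_ae hpt
  refine le_trans (add_le_add_right ?_ _) hint
  -- lower bound the min-term by ε2 log 2
  have hfint : ∀ t, Integrable (f t) P := fun t => integrable_condExp
  have hgint : ∀ t, Integrable (g t) P := fun t => integrable_condExp
  have hminint : ∀ t : Fin k → Bool, Integrable (fun x => min (f t x) (g t x)) P := by
    intro t
    have := (hfint t).inf (hgint t)
    exact this
  have hminnn : ∀ t : Fin k → Bool, 0 ≤ᵐ[P] fun x => min (f t x) (g t x) := by
    intro t
    filter_upwards [hae] with x hx
    obtain ⟨hf0, hg0, -, -⟩ := hx t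
    exact le_min hf0 hg0
  -- each lintegral equals ofReal of the Bochner integral
  have hlint : ∀ t : Fin k → Bool,
      ∫⁻ x, ENNReal.ofReal (min (f t x) (g t x) * Real.log 2) ∂P
        = ENNReal.ofReal ((∫ x, min (f t x) (g t x) ∂P) * Real.log 2) := by
    intro t
    rw [← integral_mul_const]
    refine (ofReal_integral_eq_lintegral_ofReal ((hminint t).mul_const _) ?_).symm
    filter_upwards [hminnn t] with x hx
    exact mul_nonneg hx (Real.log_nonneg (by norm_num))
  -- compute the integral of the min
  have hIeq : ∀ t : Fin k → Bool, ∫ x, min (f t x) (g t x) ∂P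
      = (P ((atom A k t ∩ (A k)ᶜ) ∩ D t)).toReal + (P ((atom A k t ∩ A k) ∩ (D t)ᶜ)).toReal := by
    intro t
    have hDmX : MeasurableSet[mX] (D t) := hm _ (hDm t)
    have hsplit : ∫ x in D t, min (f t x) (g t x) ∂P + ∫ x in (D t)ᶜ, min (f t x) (g t x) ∂P
        = ∫ x, min (f t x) (g t x) ∂P := integral_add_compl hDmX (hminint t)
    have e1 : ∫ x in D t, min (f t x) (g t x) ∂P = ∫ x in D t, g t x ∂P := by
      refine setIntegral_congr_fun hDmX fun x hx => ?_
      exact min_eq_right hx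
    have e2 : ∫ x in (D t)ᶜ, min (f t x) (g t x) ∂P = ∫ x in (D t)ᶜ, f t x ∂P := by
      refine setIntegral_congr_fun hDmX.compl fun x hx => ?_
      have : f t x ≤ g t x := le_of_not_ge hx
      exact min_eq_left this
    rw [← hsplit, e1, e2, setIntegral_condProb hm (hgSme t) (hDm t),
      setIntegral_condProb hm (hfSme t) (hDm t).compl]
  -- the approximation set B and the bad-set lower bound
  set B : Set X := ⋃ t, atom A k t ∩ D t with hBdef
  have hsub : symmDiff (A k) B ⊆
      ⋃ t, ((atom A k t ∩ (A k)ᶜ ∩ D t) ∪ (atom A k t ∩ A k ∩ (D t)ᶜ)) := by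
    intro x hx
    rw [Set.mem_symmDiff] at hx
    rcases hx with ⟨hxA, hxB⟩ | ⟨hxB, hxA⟩
    · obtain ⟨t₀, ht₀⟩ := atom_cover A k x
      have hxD : x ∉ D t₀ := fun hD' => hxB (Set.mem_iUnion.mpr ⟨t₀, ht₀, hD'⟩)
      exact Set.mem_iUnion.mpr ⟨t₀, Or.inr ⟨⟨ht₀, hxA⟩, hxD⟩⟩
    · obtain ⟨t₀, ht₀⟩ := Set.mem_iUnion.mp hxB
      exact Set.mem_iUnion.mpr ⟨t₀, Or.inl ⟨⟨ht₀.1, hxA⟩, ht₀.2⟩⟩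
  have hbadB := hbad D hDm
  have hmeasbound : P (symmDiff (A k) B) ≤
      ∑ t : Fin k → Bool, (P ((atom A k t ∩ (A k)ᶜ) ∩ D t) + P ((atom A k t ∩ A k) ∩ (D t)ᶜ)) := by
    refine le_trans (measure_mono hsub) (le_trans (measure_iUnion_le _) ?_)
    rw [tsum_fintype]
    exact Finset.sum_le_sum fun t _ => measure_union_le _ _
  set S : ℝ≥0∞ := ∑ t : Fin k → Bool,
      (P ((atom A k t ∩ (A k)ᶜ) ∩ D t) + P ((atom A k t ∩ A k) ∩ (D t)ᶜ)) with hSdef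
  have hSne : S ≠ ⊤ := by
    refine (ENNReal.sum_lt_top.mpr fun t _ => ?_).ne
    exact ENNReal.add_lt_top.mpr ⟨measure_lt_top _ _, measure_lt_top _ _⟩
  have hε2S : ε2 ≤ S.toReal := by
    have h1 : ENNReal.ofReal ε2 ≤ S := le_trans hbadB hmeasbound
    exact (ENNReal.ofReal_le_iff_le_toReal hSne).mp h1
  have hStoReal : S.toReal = ∑ t : Fin k → Bool, ∫ x, min (f t x) (g t x) ∂P := by
    rw [hSdef, ENNReal.toReal_sum]
    · refine Finset.sum_congr rfl fun t _ => ?_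
      rw [ENNReal.toReal_add (measure_lt_top _ _).ne (measure_lt_top _ _).ne, hIeq t]
    · exact fun t _ => (ENNReal.add_lt_top.mpr ⟨measure_lt_top _ _, measure_lt_top _ _⟩).ne
  -- put it together
  calc ENNReal.ofReal (ε2 * Real.log 2)
      ≤ ENNReal.ofReal ((∑ t : Fin k → Bool, ∫ x, min (f t x) (g t x) ∂P) * Real.log 2) := by
        refine ENNReal.ofReal_le_ofReal ?_
        refine mul_le_mul_of_nonneg_right ?_ (Real.log_nonneg (by norm_num))
        rw [← hStoReal]; exact hε2S
    _ = ENNReal.ofReal (∑ t : Fin k → Bool, (∫ x, min (f t x) (g t x) ∂P) * Real.log 2) := by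
        rw [Finset.sum_mul]
    _ = ∑ t : Fin k → Bool, ENNReal.ofReal ((∫ x, min (f t x) (g t x) ∂P) * Real.log 2) := by
        refine ENNReal.ofReal_sum_of_nonneg fun t _ => ?_
        refine mul_nonneg ?_ (Real.log_nonneg (by norm_num))
        exact integral_nonneg_of_ae (hminnn t)
    _ = ∑ t : Fin k → Bool, ∫⁻ x, ENNReal.ofReal (min (f t x) (g t x) * Real.log 2) ∂P := by
        exact Finset.sum_congr rfl fun t _ => (hlint t).symm

end MartinAux

namespace MartinAux

open MCE

variable {X : Type*} {m : MeasurableSpace X} {mX : MeasurableSpace X} {P : Measure X}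

lemma ent_eq_pCondEntropy [IsProbabilityMeasure P] {ainf : MeasurableSpace X}
    (A : ℕ → Set X) (k : ℕ) (hA : ∀ i, MeasurableSet[ainf] (A i)) :
    ∃ ξ : Set (Set X), FinPartitionIn ainf ξ ∧ pCondEntropy mX P m ξ = ent mX P m A k := by
  classical
  set ξ : Set (Set X) := Set.range (atom A k) \ {∅} with hξdef
  have hfin : ξ.Finite := (Set.finite_range (atom A k)).subset Set.diff_subset
  refine ⟨ξ, ⟨hfin, ⟨?_, ?_⟩, ?_⟩, ?_⟩
  · -- pairwise disjoint
    intro Q hQ R hR hne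
    obtain ⟨s, hs⟩ := hQ.1
    obtain ⟨t, ht⟩ := hR.1
    have hst : s ≠ t := fun h => hne (by rw [← hs, ← ht, h])
    have := atom_disjoint A hst
    rw [hs, ht] at this
    exact this
  · -- covers
    refine Set.eq_univ_iff_forall.mpr fun x => ?_
    obtain ⟨s, hx⟩ := atom_cover A k x
    refine Set.mem_sUnion.mpr ⟨atom A k s, ⟨⟨s, rfl⟩, ?_⟩, hx⟩
    simp only [Set.mem_singleton_iff]
    exact fun h => (h ▸ hx : x ∈ (∅ : Set X))
  · -- atoms measurable in ainf
    rintro Q ⟨⟨s, rfl⟩, -⟩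
    exact atom_measurable A hA s
  · -- entropy value
    rw [pCondEntropy, if_pos hfin.countable]
    unfold ent
    refine lintegral_congr fun x => ?_
    set F : Set X → ℝ≥0∞ := fun Q => ENNReal.ofReal (Real.negMulLog (condProb mX P m Q x))
      with hFdef
    have hF0 : F ∅ = 0 := by
      rw [hFdef]
      simp only [condProb_empty, Pi.zero_apply, Real.negMulLog_zero, ENNReal.ofReal_zero]
    have h1 : (∑' Q : ξ, F (Q : Set X)) = ∑ Q ∈ hfin.toFinset, F Q := by
      rw [tsum_subtype ξ F, tsum_eq_sum (s := hfin.toFinset)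
        (fun Q hQ => Set.indicator_of_notMem (by simpa using hQ) F)]
      exact Finset.sum_congr rfl fun Q hQ =>
        Set.indicator_of_mem (by simpa using hQ) F
    rw [h1]
    set T : Finset (Fin k → Bool) := Finset.univ.filter (fun s => atom A k s ≠ ∅) with hTdef
    have himg : T.image (atom A k) = hfin.toFinset := by
      ext Q
      simp only [Finset.mem_image, hTdef, Finset.mem_filter, Finset.mem_univ, true_and,
        Set.Finite.mem_toFinset, hξdef, Set.mem_diff, Set.mem_range, Set.mem_singleton_iff]
      constructor
      · rintro ⟨s, hne, rfl⟩; exact ⟨⟨s, rfl⟩, hne⟩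
      · rintro ⟨⟨s, rfl⟩, hne⟩; exact ⟨s, hne, rfl⟩
    have hinj : ∀ s ∈ T, ∀ t ∈ T, atom A k s = atom A k t → s = t := by
      intro s hs t ht heq
      by_contra hne
      have hd := atom_disjoint A hne
      rw [heq] at hd
      have : atom A k t = ∅ := by
        simpa using Set.disjoint_iff_inter_eq_empty.mp hd
      exact (Finset.mem_filter.mp ht).2 this
    rw [← himg, Finset.sum_image (f := F) hinj]
    show ∑ s ∈ T, F (atom A k s) = ∑ s : Fin k → Bool, F (atom A k s)
    refine Finset.sum_filter_of_ne fun s _ hne => ?_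
    intro hempty
    refine hne ?_
    rw [hempty, hF0]

lemma ent_le_iSup [IsProbabilityMeasure P] {ainf : MeasurableSpace X}
    (A : ℕ → Set X) (k : ℕ) (hA : ∀ i, MeasurableSet[ainf] (A i)) :
    ent mX P m A k ≤ ⨆ (ξ : Set (Set X)) (_ : FinPartitionIn ainf ξ), pCondEntropy mX P m ξ := by
  obtain ⟨ξ, h1, h2⟩ := ent_eq_pCondEntropy (mX := mX) (P := P) (m := m) A k hA
  rw [← h2]
  exact le_iSup₂ (f := fun ξ (_ : FinPartitionIn ainf ξ) => pCondEntropy mX P m ξ) ξ h1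

/-- approximation of `⨆ n, a n`-measurable sets by sets in some `a N`. -/
lemma approx_lemma {a : ℕ → MeasurableSpace X} (hmono : Monotone a) (hle : ∀ n, a n ≤ mX)
    [IsProbabilityMeasure P] {S : Set X} (hS : MeasurableSet[⨆ n, a n] S) {δ : ℝ} (hδ : 0 < δ) :
    ∃ N T, MeasurableSet[a N] T ∧ P (symmDiff S T) < ENNReal.ofReal δ := by
  classical
  set m' : MeasurableSpace X :=
    { MeasurableSet' := fun S => ∀ δ : ℝ, 0 < δ →
        ∃ N T, MeasurableSet[a N] T ∧ P (symmDiff S T) < ENNReal.ofReal δ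
      measurableSet_empty := fun δ hδ =>
        ⟨0, ∅, @MeasurableSet.empty X (a 0), by
          simpa [symmDiff_self, Set.bot_eq_empty] using ENNReal.ofReal_pos.mpr hδ⟩
      measurableSet_compl := by
        rintro S hS δ hδ
        obtain ⟨N, T, hT, hPT⟩ := hS δ hδ
        exact ⟨N, Tᶜ, hT.compl, by rwa [compl_symmDiff_compl]⟩
      measurableSet_iUnion := by
        intro s hs δ hδ
        choose N T hT hPT using fun i => hs i (δ / 2 / 2 / 2 ^ i) (by positivity)
        have hTmeas : ∀ i, MeasurableSet[mX] (T i) := fun i => hle (N i) _ (hT i)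
        set V : Set X := ⋃ i, T i with hVdef
        have bound1 : P (symmDiff (⋃ i, s i) V) ≤ ENNReal.ofReal (δ / 2) := by
          have hsub : symmDiff (⋃ i, s i) V ⊆ ⋃ i, symmDiff (s i) (T i) := by
            intro x hx
            rw [Set.mem_symmDiff] at hx
            rcases hx with ⟨hx1, hx2⟩ | ⟨hx1, hx2⟩
            · obtain ⟨i, hi⟩ := Set.mem_iUnion.mp hx1
              have : x ∉ T i := fun h => hx2 (Set.mem_iUnion.mpr ⟨i, h⟩)
              exact Set.mem_iUnion.mpr ⟨i, Set.mem_symmDiff.mpr (Or.inl ⟨hi, this⟩)⟩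
            · obtain ⟨i, hi⟩ := Set.mem_iUnion.mp hx1
              have : x ∉ s i := fun h => hx2 (Set.mem_iUnion.mpr ⟨i, h⟩)
              exact Set.mem_iUnion.mpr ⟨i, Set.mem_symmDiff.mpr (Or.inr ⟨hi, this⟩)⟩
          refine le_trans (measure_mono hsub) (le_trans (measure_iUnion_le _) ?_)
          have hsummable : Summable fun i : ℕ => δ / 2 / 2 / 2 ^ i := summable_geometric_two' _
          calc ∑' i, P (symmDiff (s i) (T i))
              ≤ ∑' i, ENNReal.ofReal (δ / 2 / 2 / 2 ^ i) :=
                ENNReal.tsum_le_tsum fun i => (hPT i).le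
            _ = ENNReal.ofReal (∑' i, δ / 2 / 2 / 2 ^ i) :=
                (ENNReal.ofReal_tsum_of_nonneg (fun i => by positivity) hsummable).symm
            _ = ENNReal.ofReal (δ / 2) := by rw [tsum_geometric_two' (δ / 2)]
        -- approximate V by a finite accumulation
        have hsup : P V = ⨆ n, P (Set.accumulate T n) := measure_iUnion_eq_iSup_accumulate
        have hexn : ∃ n, P V ≤ P (Set.accumulate T n) + ENNReal.ofReal (δ / 4) := by
          by_cases h0 : P V ≤ ENNReal.ofReal (δ / 4)
          · exact ⟨0, le_trans h0 (self_le_add_left _ _)⟩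
          · push_neg at h0
            have hVne : P V ≠ ⊤ := measure_ne_top _ _
            have hne0 : P V ≠ 0 := (lt_of_le_of_lt zero_le h0).ne'
            have hofne : ENNReal.ofReal (δ / 4) ≠ 0 :=
              (ENNReal.ofReal_pos.mpr (by positivity)).ne'
            have hsub_lt : P V - ENNReal.ofReal (δ / 4) < P V :=
              ENNReal.sub_lt_self hVne hne0 hofne
            rw [hsup] at hsub_lt
            obtain ⟨n, hn⟩ := lt_iSup_iff.mp hsub_lt
            rw [← hsup] at hn
            exact ⟨n, (ENNReal.lt_add_of_sub_lt_right (Or.inl hVne) hn).le⟩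
        obtain ⟨n, hn⟩ := hexn
        have hAccSub : Set.accumulate T n ⊆ V := Set.accumulate_subset_iUnion n
        have hAccMeas : MeasurableSet[mX] (Set.accumulate T n) := by
          rw [Set.accumulate_def]
          exact MeasurableSet.biUnion (Set.to_countable _) fun j _ => hTmeas j
        have bound2 : P (symmDiff V (Set.accumulate T n)) ≤ ENNReal.ofReal (δ / 4) := by
          have : symmDiff V (Set.accumulate T n) = V \ Set.accumulate T n := by
            rw [Set.symmDiff_def]
            rw [Set.diff_eq_empty.mpr hAccSub, Set.union_empty]
          rw [this, measure_diff hAccSub hAccMeas.nullMeasurableSet (measure_ne_top _ _)]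
          exact tsub_le_iff_right.mpr (by rwa [add_comm] at hn)
        -- the accumulated set lies in a single a N'
        set N' : ℕ := (Finset.range (n + 1)).sup N with hN'def
        have hAccN' : MeasurableSet[a N'] (Set.accumulate T n) := by
          rw [Set.accumulate_def]
          refine MeasurableSet.biUnion (Set.to_countable _) fun j hj => ?_
          refine hmono (Finset.le_sup (Finset.mem_range.mpr (Nat.lt_succ_of_le hj))) _ (hT j)
        refine ⟨N', Set.accumulate T n, hAccN', ?_⟩
        calc P (symmDiff (⋃ i, s i) (Set.accumulate T n))
            ≤ P (symmDiff (⋃ i, s i) V) + P (symmDiff V (Set.accumulate T n)) :=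
              le_trans (measure_mono (symmDiff_triangle _ V _)) (measure_union_le _ _)
          _ ≤ ENNReal.ofReal (δ / 2) + ENNReal.ofReal (δ / 4) := add_le_add bound1 bound2
          _ = ENNReal.ofReal (δ / 2 + δ / 4) := (ENNReal.ofReal_add (by positivity) (by positivity)).symm
          _ < ENNReal.ofReal δ := (ENNReal.ofReal_lt_ofReal_iff hδ).mpr (by linarith) }
    with hm'def
  have hle' : ∀ n, a n ≤ m' := by
    intro n S hSn δ' hδ'
    exact ⟨n, S, hSn, by
      simpa [symmDiff_self, Set.bot_eq_empty] using ENNReal.ofReal_pos.mpr hδ'⟩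
  exact (iSup_le hle' : (⨆ n, a n) ≤ m') S hS δ hδ

end MartinAux

namespace MartinAux

variable {X : Type*}

lemma symmDiff_iUnion_subset {ι : Type*} (U V : ι → Set X) :
    symmDiff (⋃ i, U i) (⋃ i, V i) ⊆ ⋃ i, symmDiff (U i) (V i) := by
  intro x hx
  rw [Set.mem_symmDiff] at hx
  rcases hx with ⟨hx1, hx2⟩ | ⟨hx1, hx2⟩
  · obtain ⟨i, hi⟩ := Set.mem_iUnion.mp hx1
    have : x ∉ V i := fun h => hx2 (Set.mem_iUnion.mpr ⟨i, h⟩)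
    exact Set.mem_iUnion.mpr ⟨i, Set.mem_symmDiff.mpr (Or.inl ⟨hi, this⟩)⟩
  · obtain ⟨i, hi⟩ := Set.mem_iUnion.mp hx1
    have : x ∉ U i := fun h => hx2 (Set.mem_iUnion.mpr ⟨i, h⟩)
    exact Set.mem_iUnion.mpr ⟨i, Set.mem_symmDiff.mpr (Or.inr ⟨hi, this⟩)⟩

lemma symmDiff_inter_subset (U V D : Set X) :
    symmDiff (U ∩ D) (V ∩ D) ⊆ symmDiff U V := by
  intro x hx
  rw [Set.mem_symmDiff] at hx ⊢
  rcases hx with ⟨⟨h1, h2⟩, h3⟩ | ⟨⟨h1, h2⟩, h3⟩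
  · exact Or.inl ⟨h1, fun h => h3 ⟨h, h2⟩⟩
  · exact Or.inr ⟨h1, fun h => h3 ⟨h, h2⟩⟩

end MartinAux

open MCE MeasureTheory

/-- Lemma 1 of Martin (1969). If `(aₙ)` is an increasing sequence of
sub-σ-fields generating `a` and for some `n` the conditional entropy given `aₙ` is
uniformly bounded over all finite partitions with atoms in `a`, then sets of `a` can be
approximated by sets of a single `a_N` uniformly: for every `ε > 0` there is `N` such
that every `A ∈ a` admits `B ∈ a_N` with `P(A △ B) < ε`. -/
theorem stmt0 {X : Type*} (mX : MeasurableSpace X) (P : @Measure X mX)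
    (hP : @IsProbabilityMeasure X mX P)
    (a : ℕ → MeasurableSpace X) (hmono : Monotone a) (hle : ∀ n, a n ≤ mX)
    (ainf : MeasurableSpace X) (hainf : ainf = ⨆ n, a n)
    (hmartin : ∃ n : ℕ, (⨆ (ξ : Set (Set X)) (_ : FinPartitionIn ainf ξ),
      pCondEntropy mX P (a n) ξ) < ⊤) :
    ∀ ε : ℝ, 0 < ε → ∃ N : ℕ, ∀ A : Set X, MeasurableSet[ainf] A →
      ∃ B : Set X, MeasurableSet[a N] B ∧ P (symmDiff A B) < ENNReal.ofReal ε := by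
  classical
  haveI := hP
  intro ε hε
  by_contra hcon
  push_neg at hcon
  -- hcon : ∀ N, ∃ A, MeasurableSet[ainf] A ∧ ∀ B, MeasurableSet[a N] B → ofReal ε ≤ P (A △ B)
  obtain ⟨n₀, hM⟩ := hmartin
  have hc : a n₀ ≤ mX := hle n₀
  have hainf_le : ainf ≤ mX := hainf ▸ iSup_le hle
  -- step 1: recursive construction of hard-to-approximate sets
  have hconstruct : ∀ k : ℕ, ∃ A : ℕ → Set X,
      (∀ i, MeasurableSet[ainf] (A i)) ∧
      ∀ j ≤ k, ∀ D : (Fin j → Bool) → Set X, (∀ t, MeasurableSet[a n₀] (D t)) →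
          ENNReal.ofReal (ε / 2) ≤ P (symmDiff (A j) (⋃ t, MartinAux.atom A j t ∩ D t)) := by
    intro k
    induction k with
    | zero =>
      obtain ⟨A₀, hA₀m, hA₀⟩ := hcon n₀
      refine ⟨fun _ => A₀, fun _ => hA₀m, ?_⟩
      intro j hj D hD
      obtain rfl : j = 0 := Nat.le_zero.mp hj
      have hBeq : (⋃ t : Fin 0 → Bool, MartinAux.atom (fun _ => A₀) 0 t ∩ D t)
          = D default := by
        have h1 : ∀ t : Fin 0 → Bool, MartinAux.atom (fun _ => A₀) 0 t ∩ D t = D default := by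
          intro t
          rw [Subsingleton.elim t default, MartinAux.atom_zero, Set.univ_inter]
        rw [Set.iUnion_congr h1, Set.iUnion_const]
      rw [hBeq]
      refine le_trans (ENNReal.ofReal_le_ofReal (by linarith)) (hA₀ _ (hD default))
    | succ k IH =>
      obtain ⟨A, hAmeas, hA⟩ := IH
      set δk : ℝ := (ε / 2) / (2 : ℝ) ^ (k + 1) with hδkdef
      have happrox : ∀ t : Fin (k + 1) → Bool, ∃ N T, MeasurableSet[a N] T ∧
          P (symmDiff (MartinAux.atom A (k + 1) t) T) < ENNReal.ofReal δk := by
        intro t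
        refine MartinAux.approx_lemma hmono hle ?_ (by positivity)
        rw [← hainf]
        exact MartinAux.atom_measurable A hAmeas t
      choose N T hT hPT using happrox
      set m₁ : ℕ := max n₀ (Finset.univ.sup N) with hm₁def
      obtain ⟨Astar, hAstarm, hAstar⟩ := hcon m₁
      set A' : ℕ → Set X := Function.update A (k + 1) Astar with hA'def
      have hupdlt : ∀ {j : ℕ}, j ≤ k + 1 → ∀ i : Fin j, A' (i : ℕ) = A (i : ℕ) := by
        intro j hj i
        exact Function.update_of_ne (by omega) _ _
      have hatomeq : ∀ {j : ℕ}, j ≤ k + 1 → ∀ t : Fin j → Bool,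
          MartinAux.atom A' j t = MartinAux.atom A j t := by
        intro j hj t
        exact MartinAux.atom_congr A' (fun i => hupdlt hj i) t
      refine ⟨A', fun i => ?_, ?_⟩
      · by_cases hi : i = k + 1
        · rw [hA'def, hi, Function.update_self]; exact hAstarm
        · rw [hA'def, Function.update_of_ne hi]; exact hAmeas i
      intro j hj D hD
      rcases Nat.lt_or_ge j (k + 1) with hjk | hjk
      · have hAj := hA j (by omega) D hD
        have hrw : (⋃ t, MartinAux.atom A' j t ∩ D t) = ⋃ t, MartinAux.atom A j t ∩ D t :=
          Set.iUnion_congr fun t => by rw [hatomeq (by omega) t]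
        rw [hrw, hA'def, Function.update_of_ne (by omega)]
        exact hAj
      · obtain rfl : j = k + 1 := le_antisymm hj hjk
        have hrw : (⋃ t, MartinAux.atom A' (k + 1) t ∩ D t)
            = ⋃ t, MartinAux.atom A (k + 1) t ∩ D t :=
          Set.iUnion_congr fun t => by rw [hatomeq le_rfl t]
        rw [hrw, hA'def, Function.update_self]
        set B : Set X := ⋃ t, MartinAux.atom A (k + 1) t ∩ D t with hBdef
        set B' : Set X := ⋃ t, T t ∩ D t with hB'def
        have hB'm : MeasurableSet[a m₁] B' := by
          refine MeasurableSet.iUnion fun t => MeasurableSet.inter ?_ ?_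
          · exact hmono (le_trans (Finset.le_sup (Finset.mem_univ t)) (le_max_right _ _)) _ (hT t)
          · exact hmono (le_max_left _ _) _ (hD t)
        have h1 : ENNReal.ofReal ε ≤ P (symmDiff Astar B') := hAstar B' hB'm
        have h2 : P (symmDiff B B') ≤ ENNReal.ofReal (ε / 2) := by
          have hsub : symmDiff B B' ⊆ ⋃ t, symmDiff (MartinAux.atom A (k + 1) t) (T t) := by
            refine subset_trans (MartinAux.symmDiff_iUnion_subset _ _) ?_
            exact Set.iUnion_mono fun t => MartinAux.symmDiff_inter_subset _ _ _
          refine le_trans (measure_mono hsub) (le_trans (measure_iUnion_le _) ?_)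
          rw [tsum_fintype]
          calc ∑ t : Fin (k + 1) → Bool, P (symmDiff (MartinAux.atom A (k + 1) t) (T t))
              ≤ ∑ _t : Fin (k + 1) → Bool, ENNReal.ofReal δk :=
                Finset.sum_le_sum fun t _ => (hPT t).le
            _ = (Fintype.card (Fin (k + 1) → Bool) : ℝ≥0∞) * ENNReal.ofReal δk := by
                rw [Finset.sum_const, Finset.card_univ, nsmul_eq_mul]
            _ = ENNReal.ofReal ((Fintype.card (Fin (k + 1) → Bool) : ℝ) * δk) := by
                rw [ENNReal.ofReal_mul (by positivity), ENNReal.ofReal_natCast]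
            _ = ENNReal.ofReal (ε / 2) := by
                congr 1
                have hcard : (Fintype.card (Fin (k + 1) → Bool) : ℝ) = 2 ^ (k + 1) := by
                  simp [Fintype.card_fun]
                rw [hcard, hδkdef]
                field_simp
        have h3 : ENNReal.ofReal ε ≤ P (symmDiff Astar B) + ENNReal.ofReal (ε / 2) := by
          refine le_trans h1 (le_trans ?_ (add_le_add_right h2 _))
          refine le_trans (measure_mono (symmDiff_triangle Astar B B')) (measure_union_le _ _)
        have h4 : ENNReal.ofReal (ε / 2) + ENNReal.ofReal (ε / 2) = ENNReal.ofReal ε := by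
          rw [← ENNReal.ofReal_add (by positivity) (by positivity)]
          norm_num
        rw [← h4] at h3
        exact (ENNReal.add_le_add_iff_right ENNReal.ofReal_ne_top).mp h3
  -- step 2: choose k large enough
  set q : ℝ≥0∞ := ENNReal.ofReal ((ε / 2) * Real.log 2) with hqdef
  have hq0 : q ≠ 0 := by
    refine (ENNReal.ofReal_pos.mpr ?_).ne'
    have : (0:ℝ) < Real.log 2 := Real.log_pos (by norm_num)
    positivity
  have hqt : q ≠ ⊤ := ENNReal.ofReal_ne_top
  set M : ℝ≥0∞ := ⨆ (ξ : Set (Set X)) (_ : FinPartitionIn ainf ξ), pCondEntropy mX P (a n₀) ξ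
    with hMdef
  obtain ⟨k, hk⟩ := ENNReal.exists_nat_gt ((ENNReal.div_lt_top hM.ne hq0).ne)
  have hMk : M < (k : ℝ≥0∞) * q := by
    rwa [ENNReal.div_lt_iff (Or.inl hq0) (Or.inl hqt)] at hk
  obtain ⟨A, hAmeas, hA⟩ := hconstruct k
  have hAmX : ∀ i, MeasurableSet[mX] (A i) := fun i => hainf_le _ (hAmeas i)
  -- step 3: entropy lower bound by induction
  have hlow : ∀ j, j ≤ k → (j : ℝ≥0∞) * q ≤ MartinAux.ent mX P (a n₀) A j := by
    intro j
    induction j with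
    | zero => simp
    | succ j IHj =>
      intro hjk
      have h1 := IHj (by omega)
      have hstep := MartinAux.ent_step (P := P) hc A j hAmX
        (show (0:ℝ) < ε / 2 by positivity) (hA j (by omega))
      calc ((j + 1 : ℕ) : ℝ≥0∞) * q = (j : ℝ≥0∞) * q + q := by push_cast; ring
        _ ≤ MartinAux.ent mX P (a n₀) A j + ENNReal.ofReal ((ε / 2) * Real.log 2) :=
            add_le_add h1 le_rfl
        _ ≤ MartinAux.ent mX P (a n₀) A (j + 1) := hstep
  -- step 4: entropy upper bound
  have hup : MartinAux.ent mX P (a n₀) A k ≤ M :=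
    MartinAux.ent_le_iSup (mX := mX) (P := P) (m := a n₀) A k hAmeas
  exact absurd (lt_of_le_of_lt (le_trans (hlow k le_rfl) hup) hMk) (lt_irrefl _)
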